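/- Let G be the Gaussian (Forrelation) distribution on ℝ^{2N} with moments satisfying: Ĝ(I) = 0 when |I| is odd, and |Ĝ(I)| ≤ ε^i i! N^{-i/2} when |I| = 2i; let U be uniform on {-1,1}^{2N}. Define μ₀^(k) and μ₁^(k) as the even- and odd-parity mixtures 2^{-(k-1)} ∑_{|S| even/odd} G^S U^{S̄}. Then for index I = (I₁,…,I_k): (1) if |I| < 2k or some I_j = ∅, then μ̂₀(I) = μ̂₁(I); (2) if some |I_j| is odd, then μ̂₀(I) = μ̂₁(I); (3) if |I| = 2i, then |μ̂₀(I) − μ̂₁(I)| ≤ 2^{-k+1} ε^i N^{-i/2} i!. -/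

import Mathlib

open MeasureTheory ProbabilityTheory
open scoped NNReal ENNReal

/-- The moment `D̂(I) = E_{z∼D}[∏_{i∈I} z_i]` of a distribution on `ℝ^M`. -/
noncomputable def mom {M : ℕ} (D : Measure (Fin M → ℝ)) (I : Finset (Fin M)) : ℝ :=
  ∫ z, ∏ i ∈ I, z i ∂D

/-- The moment of a distribution on `(ℝ^M)^k` indexed by a block index. -/
noncomputable def blockMom {M k : ℕ} (D : Measure (Fin k → Fin M → ℝ))
    (I : Fin k → Finset (Fin M)) : ℝ :=
  ∫ z, ∏ j, ∏ i ∈ I j, z j i ∂D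

/-- The product distribution `G^S U^{S̄}`. -/
noncomputable def prodDist {M k : ℕ} (G U : Measure (Fin M → ℝ))
    (S : Finset (Fin k)) : Measure (Fin k → Fin M → ℝ) :=
  Measure.pi fun j => if j ∈ S then G else U

/-- The uniform distribution on `{-1,1}^M`. -/
noncomputable def uniformSigns (M : ℕ) : Measure (Fin M → ℝ) :=
  Measure.pi fun _ =>
    (2 : ℝ≥0∞)⁻¹ • Measure.dirac (1 : ℝ) + (2 : ℝ≥0∞)⁻¹ • Measure.dirac (-1 : ℝ)

/-- The even-parity mixture `μ₀^(k) = 2^{-(k-1)} ∑_{|S| even} G^S U^{S̄}`. -/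
noncomputable def muEven {M k : ℕ} (G : Measure (Fin M → ℝ)) :
    Measure (Fin k → Fin M → ℝ) :=
  ((2 : ℝ≥0∞) ^ (k - 1))⁻¹ •
    ∑ S ∈ Finset.univ.filter (fun S : Finset (Fin k) => Even S.card),
      prodDist G (uniformSigns M) S

/-- The odd-parity mixture `μ₁^(k) = 2^{-(k-1)} ∑_{|S| odd} G^S U^{S̄}`. -/
noncomputable def muOdd {M k : ℕ} (G : Measure (Fin M → ℝ)) :
    Measure (Fin k → Fin M → ℝ) :=
  ((2 : ℝ≥0∞) ^ (k - 1))⁻¹ •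
    ∑ S ∈ Finset.univ.filter (fun S : Finset (Fin k) => Odd S.card),
      prodDist G (uniformSigns M) S

/-! The moment of `G^S U^{S̄}` at a block index `I` factors as `∏ⱼ D̂ⱼ(Iⱼ)` with `Dⱼ = G` for
`j ∈ S` and `Dⱼ = U` otherwise, so the signed sum `∑_S (-1)^|S| (G^S U^{S̄})^(I)`, which is
`2^{k-1} (μ̂₀(I) - μ̂₁(I))`, collapses to `∏ⱼ (Û(Iⱼ) - Ĝ(Iⱼ))`. A factor vanishes when `Iⱼ = ∅`
(both moments are `1`) or `|Iⱼ|` is odd (both are `0`), and otherwise equals `-Ĝ(Iⱼ)`; when all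
`|Iⱼ| = 2iⱼ` the bounds on `Ĝ` multiply, and `∏ iⱼ! ≤ (∑ iⱼ)!` gives the claimed bound. -/

open Finset

lemma integral_prod_finset_pi {ι 𝕜 : Type*} [Fintype ι] [RCLike 𝕜] {E : ι → Type*}
    [∀ i, MeasurableSpace (E i)] (μ : ∀ i, Measure (E i)) [∀ i, IsProbabilityMeasure (μ i)]
    (s : Finset ι) (f : ∀ i, E i → 𝕜) :
    ∫ x, ∏ i ∈ s, f i (x i) ∂Measure.pi μ = ∏ i ∈ s, ∫ x, f i x ∂μ i := by
  classical
  have h := integral_fintype_prod_eq_prod (μ := μ) fun i => if i ∈ s then f i else 1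
  simp only [ite_apply, Pi.one_apply, prod_ite_mem_eq] at h
  rw [h, ← prod_ite_mem_eq s]
  refine prod_congr rfl fun i _ => ?_
  split_ifs <;> simp

lemma sum_filter_even_sub_sum_filter_odd {ι R : Type*} [Fintype ι] [DecidableEq ι] [CommRing R]
    (a b : ι → R) :
    ∑ S : Finset ι with Even S.card, ∏ j, (if j ∈ S then a j else b j)
      - ∑ S : Finset ι with Odd S.card, ∏ j, (if j ∈ S then a j else b j)
      = ∏ j, (b j - a j) := by
  have hexpand : ∏ j, (b j - a j)
      = ∑ S : Finset ι, (-1) ^ S.card * ∏ j, (if j ∈ S then a j else b j) := by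
    simp only [sub_eq_neg_add, Fintype.prod_add, prod_neg, prod_ite, mul_assoc]
    simp [filter_not, compl_eq_univ_sdiff]
  rw [hexpand, ← sum_filter_add_sum_filter_not univ (fun S : Finset ι => Even S.card)]
  simp only [Nat.not_even_iff_odd]
  rw [sub_eq_add_neg, ← sum_neg_distrib]
  congr 1 <;> refine sum_congr rfl fun S hS => ?_ <;> rw [mem_filter] at hS
  · rw [hS.2.neg_one_pow, one_mul]
  · rw [hS.2.neg_one_pow, neg_one_mul]

lemma prod_pow_mul_factorial_div_pow_le {ι : Type*} (s : Finset ι) (c : ι → ℕ) {ε r : ℝ}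
    (hε : 0 ≤ ε) (hr : 0 ≤ r) :
    ∏ j ∈ s, ε ^ c j * (c j).factorial / r ^ c j
      ≤ ε ^ (∑ j ∈ s, c j) * (∑ j ∈ s, c j).factorial / r ^ (∑ j ∈ s, c j) := by
  rw [prod_div_distrib, prod_mul_distrib, prod_pow_eq_pow_sum, prod_pow_eq_pow_sum]
  gcongr
  exact_mod_cast Nat.le_of_dvd (Nat.factorial_pos _) (Nat.prod_factorial_dvd_factorial_sum s c)

lemma exists_eq_empty_or_odd_card_of_sum_card_lt {ι α : Type*} [Fintype ι] (I : ι → Finset α)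
    (h : ∑ j, (I j).card < 2 * Fintype.card ι) : ∃ j, I j = ∅ ∨ Odd (I j).card := by
  obtain ⟨j, -, hj⟩ := exists_lt_of_sum_lt
    (show ∑ j, (I j).card < ∑ _j : ι, 2 by simpa [mul_comm] using h)
  obtain h | h : (I j).card = 0 ∨ (I j).card = 1 := by omega
  · exact ⟨j, .inl (card_eq_zero.1 h)⟩
  · exact ⟨j, .inr (h ▸ odd_one)⟩

noncomputable def signMeasure : Measure ℝ :=
  (2 : ℝ≥0∞)⁻¹ • Measure.dirac (1 : ℝ) + (2 : ℝ≥0∞)⁻¹ • Measure.dirac (-1 : ℝ)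

instance : IsProbabilityMeasure signMeasure :=
  ⟨by simp [signMeasure, ENNReal.inv_two_add_inv_two]⟩

lemma integral_id_signMeasure : ∫ x, x ∂signMeasure = 0 := by
  rw [signMeasure, integral_add_measure
    ((integrable_dirac enorm_lt_top).smul_measure (by simp))
    ((integrable_dirac enorm_lt_top).smul_measure (by simp))]
  simp

lemma uniformSigns_eq_pi (M : ℕ) : uniformSigns M = Measure.pi fun _ => signMeasure := rfl

instance (M : ℕ) : IsProbabilityMeasure (uniformSigns M) := by
  rw [uniformSigns_eq_pi]; infer_instance

lemma mom_empty {M : ℕ} (D : Measure (Fin M → ℝ)) [IsProbabilityMeasure D] : mom D ∅ = 1 := by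
  simp [mom]

lemma mom_uniformSigns_of_nonempty {M : ℕ} {I : Finset (Fin M)} (hI : I.Nonempty) :
    mom (uniformSigns M) I = 0 := by
  obtain ⟨i, hi⟩ := hI
  rw [mom, uniformSigns_eq_pi, integral_prod_finset_pi _ I fun _ x => x]
  exact prod_eq_zero hi integral_id_signMeasure

lemma abs_mom_uniformSigns_sub_le {M : ℕ} (G : Measure (Fin M → ℝ)) [IsProbabilityMeasure G]
    (I : Finset (Fin M)) : |mom (uniformSigns M) I - mom G I| ≤ |mom G I| := by
  rcases I.eq_empty_or_nonempty with rfl | hI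
  · simp [mom_empty]
  · simp [mom_uniformSigns_of_nonempty hI]

lemma blockMom_prodDist {M k : ℕ} (G U : Measure (Fin M → ℝ)) [SigmaFinite G] [SigmaFinite U]
    (S : Finset (Fin k)) (I : Fin k → Finset (Fin M)) :
    blockMom (prodDist G U S) I = ∏ j, if j ∈ S then mom G (I j) else mom U (I j) := by
  have : ∀ j, SigmaFinite (if j ∈ S then G else U) := fun j => by
    split_ifs <;> infer_instance
  rw [blockMom, prodDist, integral_fintype_prod_eq_prod fun j (z : Fin M → ℝ) => ∏ i ∈ I j, z i]
  refine prod_congr rfl fun j _ => ?_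
  split_ifs <;> rfl

lemma blockMom_smul_sum {M k : ℕ} {α : Type*} (c : ℝ≥0∞) (F : Finset α)
    (μ : α → Measure (Fin k → Fin M → ℝ)) (I : Fin k → Finset (Fin M))
    (hint : ∀ a ∈ F, Integrable (fun z : Fin k → Fin M → ℝ => ∏ j, ∏ i ∈ I j, z j i) (μ a)) :
    blockMom (c • ∑ a ∈ F, μ a) I = c.toReal * ∑ a ∈ F, blockMom (μ a) I := by
  rw [blockMom, integral_smul_measure, integral_finsetSum_measure hint, smul_eq_mul]
  rfl

lemma blockMom_muEven_sub_muOdd {M k : ℕ} (G : Measure (Fin M → ℝ)) [SigmaFinite G]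
    (I : Fin k → Finset (Fin M))
    (hint : ∀ S : Finset (Fin k), Integrable (fun z : Fin k → Fin M → ℝ => ∏ j, ∏ i ∈ I j, z j i)
      (prodDist G (uniformSigns M) S)) :
    blockMom (muEven (k := k) G) I - blockMom (muOdd (k := k) G) I
      = 1 / 2 ^ (k - 1) * ∏ j, (mom (uniformSigns M) (I j) - mom G (I j)) := by
  rw [muEven, muOdd, blockMom_smul_sum _ _ _ _ fun S _ => hint S,
    blockMom_smul_sum _ _ _ _ fun S _ => hint S, ← mul_sub]
  simp only [blockMom_prodDist, sum_filter_even_sub_sum_filter_odd]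
  simp

section Mixtures

variable {M k : ℕ} (G : Measure (Fin M → ℝ)) [IsProbabilityMeasure G] (I : Fin k → Finset (Fin M))

lemma blockMom_muEven_eq_muOdd
    (hint : ∀ S : Finset (Fin k), Integrable (fun z : Fin k → Fin M → ℝ => ∏ j, ∏ i ∈ I j, z j i)
      (prodDist G (uniformSigns M) S))
    (hGodd : ∀ J : Finset (Fin M), Odd J.card → mom G J = 0)
    (h : ∃ j, I j = ∅ ∨ Odd (I j).card) :
    blockMom (muEven (k := k) G) I = blockMom (muOdd (k := k) G) I := by
  obtain ⟨j, hj⟩ := h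
  rw [← sub_eq_zero, blockMom_muEven_sub_muOdd G I hint, prod_eq_zero (mem_univ j), mul_zero]
  rcases hj with hj | hj
  · simp [hj, mom_empty]
  · rw [mom_uniformSigns_of_nonempty (card_pos.1 hj.pos), hGodd _ hj, sub_self]

lemma abs_blockMom_muEven_sub_muOdd_le
    (hint : ∀ S : Finset (Fin k), Integrable (fun z : Fin k → Fin M → ℝ => ∏ j, ∏ i ∈ I j, z j i)
      (prodDist G (uniformSigns M) S))
    {ε r : ℝ} (hε : 0 ≤ ε) (hr : 0 ≤ r)
    (hGbound : ∀ (J : Finset (Fin M)) (i : ℕ), J.card = 2 * i →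
      |mom G J| ≤ ε ^ i * (i.factorial : ℝ) / r ^ i)
    (heven : ∀ j, Even (I j).card) {i : ℕ} (hi : ∑ j, (I j).card = 2 * i) :
    |blockMom (muEven (k := k) G) I - blockMom (muOdd (k := k) G) I|
      ≤ 1 / 2 ^ (k - 1) * ε ^ i * (i.factorial : ℝ) / r ^ i := by
  have hc : ∀ j, (I j).card = 2 * ((I j).card / 2) := fun j =>
    (Nat.two_mul_div_two_of_even (heven j)).symm
  have hsum : ∑ j, (I j).card / 2 = i := by
    rw [sum_congr rfl fun j _ => hc j, ← mul_sum] at hi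
    omega
  rw [blockMom_muEven_sub_muOdd G I hint, abs_mul, abs_prod, abs_of_nonneg (by positivity),
    mul_assoc, mul_div_assoc]
  gcongr
  calc ∏ j, |mom (uniformSigns M) (I j) - mom G (I j)|
      ≤ ∏ j, ε ^ ((I j).card / 2) * ((I j).card / 2).factorial / r ^ ((I j).card / 2) :=
        prod_le_prod (fun _ _ => abs_nonneg _) fun j _ =>
          (abs_mom_uniformSigns_sub_le G (I j)).trans (hGbound _ _ (hc j))
    _ ≤ _ := hsum ▸ prod_pow_mul_factorial_div_pow_le _ _ hε hr

end Mixtures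

theorem parity_mixture_moments_forrelation_general
    {N k : ℕ} (ε : ℝ) (hε : 0 ≤ ε)
    (G : Measure (Fin (2 * N) → ℝ)) [IsProbabilityMeasure G]
    (hGodd : ∀ I : Finset (Fin (2 * N)), Odd I.card → mom G I = 0)
    (hGbound : ∀ (I : Finset (Fin (2 * N))) (i : ℕ), I.card = 2 * i →
      |mom G I| ≤ ε ^ i * (i.factorial : ℝ) / Real.sqrt N ^ i)
    (hint : ∀ (S : Finset (Fin k)) (I : Fin k → Finset (Fin (2 * N))),
      Integrable (fun z : Fin k → Fin (2 * N) → ℝ => ∏ j, ∏ i ∈ I j, z j i)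
        (prodDist G (uniformSigns (2 * N)) S)) :
    ∀ I : Fin k → Finset (Fin (2 * N)),
      (((∑ j, (I j).card) < 2 * k ∨ ∃ j, I j = ∅) →
        blockMom (muEven (k := k) G) I = blockMom (muOdd (k := k) G) I)
      ∧ ((∃ j, Odd (I j).card) →
          blockMom (muEven (k := k) G) I = blockMom (muOdd (k := k) G) I)
      ∧ (∀ i : ℕ, (∑ j, (I j).card) = 2 * i →
          |blockMom (muEven (k := k) G) I - blockMom (muOdd (k := k) G) I|
            ≤ (1 / 2 ^ (k - 1) : ℝ) * ε ^ i * (i.factorial : ℝ)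
                / Real.sqrt N ^ i) := by
  intro I
  have heq := blockMom_muEven_eq_muOdd G I (hint · I) hGodd
  refine ⟨?_, fun ⟨j, hj⟩ => heq ⟨j, .inr hj⟩, fun i hi => ?_⟩
  · rintro (hlt | ⟨j, hj⟩)
    · exact heq (exists_eq_empty_or_odd_card_of_sum_card_lt I (by simpa using hlt))
    · exact heq ⟨j, .inl hj⟩
  by_cases hodd : ∃ j, Odd (I j).card
  · obtain ⟨j, hj⟩ := hodd
    rw [heq ⟨j, .inr hj⟩, sub_self, abs_zero]
    positivity
  · exact abs_blockMom_muEven_sub_muOdd_le G I (hint · I) hε (Real.sqrt_nonneg N) hGbound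
      (fun j => Nat.not_odd_iff_even.1 (not_exists.1 hodd j)) hi

/-- moments of the parity mixtures of the Forrelation
distribution `G` with the uniform distribution `U`:
(1) they agree when `|I| < 2k` or some block is empty;
(2) they agree when some block has odd size;
(3) when `|I| = 2i`, they differ by at most `2^{-k+1} ε^i N^{-i/2} i!`. -/
theorem parity_mixture_moments_forrelation
    {N k : ℕ} (hN : 1 ≤ N) (hk : 1 ≤ k) (ε : ℝ) (hε : 0 ≤ ε)
    (G : Measure (Fin (2 * N) → ℝ)) [IsProbabilityMeasure G]
    (hGodd : ∀ I : Finset (Fin (2 * N)), Odd I.card → mom G I = 0)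
    (hGbound : ∀ (I : Finset (Fin (2 * N))) (i : ℕ), I.card = 2 * i →
      |mom G I| ≤ ε ^ i * (i.factorial : ℝ) / Real.sqrt N ^ i)
    (hint : ∀ (S : Finset (Fin k)) (I : Fin k → Finset (Fin (2 * N))),
      Integrable (fun z : Fin k → Fin (2 * N) → ℝ => ∏ j, ∏ i ∈ I j, z j i)
        (prodDist G (uniformSigns (2 * N)) S)) :
    ∀ I : Fin k → Finset (Fin (2 * N)),
      (((∑ j, (I j).card) < 2 * k ∨ ∃ j, I j = ∅) →
        blockMom (muEven (k := k) G) I = blockMom (muOdd (k := k) G) I)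
      ∧ ((∃ j, Odd (I j).card) →
          blockMom (muEven (k := k) G) I = blockMom (muOdd (k := k) G) I)
      ∧ (∀ i : ℕ, (∑ j, (I j).card) = 2 * i →
          |blockMom (muEven (k := k) G) I - blockMom (muOdd (k := k) G) I|
            ≤ (1 / 2 ^ (k - 1) : ℝ) * ε ^ i * (i.factorial : ℝ)
                / Real.sqrt N ^ i) :=
  parity_mixture_moments_forrelation_general ε hε G hGodd hGbound hint
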